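/- Combining gradient tracking with zero noise-difference injection: if W is doubly stochastic, γ_i^0 = g_i^0 + Δ_i with ∑_i Δ_i = 0, updates follow γ_i^{t+1} = ∑_j W_{ij} γ_j^t + g_i^{t+1} − g_i^t and θ_i^{t+1} = ∑_j W_{ij} θ_j^t − λ γ_i^t, then for all t the average weight satisfies θ̄^{t+1} = θ̄^t − (λ/N) ∑_i g_i^t, exactly as in the noiseless recursion (same averaged trajectory given the same gradient sequence). -/
import Mathlib


/-- Gradient tracking with zero-sum noise-difference injection: the averaged
model-weight trajectory coincides with the noiseless recursion,
θ̄ᵗ⁺¹ = θ̄ᵗ − (λ/N) ∑ᵢ gᵢᵗ. -/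
theorem lppa_average_trajectory (N d : ℕ) (W : Fin N → Fin N → ℝ)
    (hWrow : ∀ i, ∑ j, W i j = 1) (hWcol : ∀ j, ∑ i, W i j = 1)
    (θ γ g : ℕ → Fin N → (Fin d → ℝ)) (Δ : Fin N → (Fin d → ℝ)) (lam : ℝ)
    (hγ0 : ∀ i, γ 0 i = g 0 i + Δ i)
    (hΔ : ∑ i, Δ i = 0)
    (hγupd : ∀ t i, γ (t + 1) i = (∑ j, W i j • γ t j) + g (t + 1) i - g t i)
    (hθupd : ∀ t i, θ (t + 1) i = (∑ j, W i j • θ t j) - lam • γ t i) :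
    ∀ t, (N : ℝ)⁻¹ • ∑ i, θ (t + 1) i =
      (N : ℝ)⁻¹ • ∑ i, θ t i - (lam / N) • ∑ i, g t i := by
  have hmix : ∀ (x : Fin N → (Fin d → ℝ)),
      ∑ i, ∑ j, W i j • x j = ∑ i, x i := by
    intro x
    rw [Finset.sum_comm]
    simp only [← Finset.sum_smul]
    congr 1; ext j; rw [hWcol j, one_smul]
  have hγsum : ∀ t, ∑ i, γ t i = ∑ i, g t i := by
    intro t
    induction t with
    | zero => simp [hγ0, Finset.sum_add_distrib, hΔ]
    | succ t ih =>
      simp only [hγupd]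
      simp [Finset.sum_sub_distrib, Finset.sum_add_distrib, hmix, ih]
  intro t
  have : ∑ i, θ (t + 1) i = ∑ i, θ t i - lam • ∑ i, g t i := by
    simp only [hθupd]
    rw [Finset.sum_sub_distrib, hmix, ← Finset.smul_sum, hγsum]
  rw [this, smul_sub, smul_smul, div_eq_inv_mul]
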